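/- arXiv:2009.08819 — 6 statements merged into one kernel-verified Lean document; each statement's English description precedes it below -/
import Mathlib

section
/- Let G_0^p, …, G_{n_g}^p : ℝ^{n_u} → ℝ and G_0, …, G_{n_g} : ℝ^{n_u} → ℝ be differentiable at a point u∞ ∈ ℝ^{n_u}. Define the modifiers ε_i := G_i^p(u∞) − G_i(u∞) for i = 1,…,n_g and λ_i := ∇G_i^p(u∞) − ∇G_i(u∞) for i = 0,…,n_g, and define the modified cost Ĝ_0(u) := G_0(u) + ⟨λ_0, u⟩ and the modified constraints Ĝ_i(u) := G_i(u) + ε_i + ⟨λ_i, u − u∞⟩ for i = 1,…,n_g. Then for every vector of multipliers μ ∈ ℝ^{n_g} with μ_i ≥ 0, the point u∞ satisfies the KKT conditions of the modified problem (minimize Ĝ_0 subject to Ĝ_i ≤ 0) with multipliers μ — i.e. ∇Ĝ_0(u∞) + Σ_{i=1}^{n_g} μ_i ∇Ĝ_i(u∞) = 0, Ĝ_i(u∞) ≤ 0 for all i, and μ_i Ĝ_i(u∞) = 0 for all i — if and only if u∞ satisfies the KKT conditions of the plant problem (minimize G_0^p subject to G_i^p ≤ 0) with the same multipliers μ, i.e.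 ∇G_0^p(u∞) + Σ_{i=1}^{n_g} μ_i ∇G_i^p(u∞) = 0, G_i^p(u∞) ≤ 0 for all i, and μ_i G_i^p(u∞) = 0 for all i. -/
/-! The modifiers make each modified function agree with its plant counterpart to first order
at `u∞`: equal values for the constraints and equal gradients for cost and constraints. The KKT
conditions at `u∞` only involve these values and gradients, so they coincide. -/

open scoped RealInnerProductSpace

open InnerProductSpace

section KKT

variable {F ι : Type*} [NormedAddCommGroup F] [InnerProductSpace ℝ F] [CompleteSpace F]
  [Fintype ι]

theorem HasGradientAt.add_const_add_inner_sub {f : F → ℝ} {g x : F} (hf : HasGradientAt f g x)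
    (a : ℝ) (c y : F) : HasGradientAt (fun u => f u + a + ⟪c, u - y⟫) (g + c) x := by
  rw [hasGradientAt_iff_hasFDerivAt] at hf ⊢
  have hinner : HasFDerivAt (fun u => ⟪c, u - y⟫) (toDual ℝ F c) x :=
    (toDual ℝ F c).hasFDerivAt.comp x ((hasFDerivAt_id x).sub_const y)
  rw [map_add]
  exact (hf.add_const a).add hinner

theorem gradient_add_const_add_inner_sub {f : F → ℝ} {x : F} (hf : DifferentiableAt ℝ f x)
    (a : ℝ) (c y : F) : gradient (fun u => f u + a + ⟪c, u - y⟫) x = gradient f x + c :=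
  (hf.hasGradientAt.add_const_add_inner_sub a c y).gradient

/-- The sign condition `0 ≤ μ` is not part of this predicate. -/
def IsKKTPoint (F₀ : F → ℝ) (Fs : ι → F → ℝ) (x : F) (μ : ι → ℝ) : Prop :=
  gradient F₀ x + ∑ i, μ i • gradient (Fs i) x = 0 ∧ (∀ i, Fs i x ≤ 0) ∧ ∀ i, μ i * Fs i x = 0

theorem isKKTPoint_congr {F₀ H₀ : F → ℝ} {Fs Hs : ι → F → ℝ} {x : F} (μ : ι → ℝ)
    (h₀ : gradient F₀ x = gradient H₀ x) (hgrad : ∀ i, gradient (Fs i) x = gradient (Hs i) x)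
    (hval : ∀ i, Fs i x = Hs i x) : IsKKTPoint F₀ Fs x μ ↔ IsKKTPoint H₀ Hs x μ := by
  simp only [IsKKTPoint, h₀, hgrad, hval]

end KKT

theorem modifier_adaptation_KKT_matching_general
    {n ng : ℕ}
    (G0p G0 : EuclideanSpace ℝ (Fin n) → ℝ)
    (Gp G : Fin ng → EuclideanSpace ℝ (Fin n) → ℝ)
    (uInf : EuclideanSpace ℝ (Fin n))
    (hG0 : DifferentiableAt ℝ G0 uInf)
    (hG : ∀ i, DifferentiableAt ℝ (G i) uInf)
    (ε : Fin ng → ℝ) (hε : ∀ i, ε i = Gp i uInf - G i uInf)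
    (lam0 : EuclideanSpace ℝ (Fin n))
    (hlam0 : lam0 = gradient G0p uInf - gradient G0 uInf)
    (lam : Fin ng → EuclideanSpace ℝ (Fin n))
    (hlam : ∀ i, lam i = gradient (Gp i) uInf - gradient (G i) uInf)
    (Ghat0 : EuclideanSpace ℝ (Fin n) → ℝ)
    (hGhat0 : ∀ u, Ghat0 u = G0 u + ⟪lam0, u⟫)
    (Ghat : Fin ng → EuclideanSpace ℝ (Fin n) → ℝ)
    (hGhat : ∀ i u, Ghat i u = G i u + ε i + ⟪lam i, u - uInf⟫)
    (μ : Fin ng → ℝ) :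
    (gradient Ghat0 uInf + ∑ i, μ i • gradient (Ghat i) uInf = 0 ∧
      (∀ i, Ghat i uInf ≤ 0) ∧ (∀ i, μ i * Ghat i uInf = 0)) ↔
    (gradient G0p uInf + ∑ i, μ i • gradient (Gp i) uInf = 0 ∧
      (∀ i, Gp i uInf ≤ 0) ∧ (∀ i, μ i * Gp i uInf = 0)) := by
  have hGhat0' : Ghat0 = fun u => G0 u + 0 + ⟪lam0, u - 0⟫ := by
    funext u
    rw [hGhat0, add_zero, sub_zero]
  have hgrad0 : gradient Ghat0 uInf = gradient G0p uInf := by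
    rw [hGhat0', gradient_add_const_add_inner_sub hG0, hlam0, add_sub_cancel]
  have hgrad i : gradient (Ghat i) uInf = gradient (Gp i) uInf := by
    rw [show Ghat i = _ from funext (hGhat i), gradient_add_const_add_inner_sub (hG i), hlam i,
      add_sub_cancel]
  have hval i : Ghat i uInf = Gp i uInf := by
    rw [hGhat i, hε i, sub_self, inner_zero_right, add_zero, add_sub_cancel]
  exact isKKTPoint_congr μ hgrad0 hgrad hval

/-- KKT-matching property of modifier adaptation: with zeroth-order modifiers
`ε_i = G_i^p(u∞) − G_i(u∞)` and first-order modifiers `λ_i = ∇G_i^p(u∞) − ∇G_i(u∞)`,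
a point `u∞` is a KKT point of the modified problem with multipliers `μ` if and only if
it is a KKT point of the plant problem with the same multipliers. -/
theorem modifier_adaptation_KKT_matching
    {n ng : ℕ}
    (G0p G0 : EuclideanSpace ℝ (Fin n) → ℝ)
    (Gp G : Fin ng → EuclideanSpace ℝ (Fin n) → ℝ)
    (uInf : EuclideanSpace ℝ (Fin n))
    (hG0p : DifferentiableAt ℝ G0p uInf) (hG0 : DifferentiableAt ℝ G0 uInf)
    (hGp : ∀ i, DifferentiableAt ℝ (Gp i) uInf)
    (hG : ∀ i, DifferentiableAt ℝ (G i) uInf)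
    (ε : Fin ng → ℝ) (hε : ∀ i, ε i = Gp i uInf - G i uInf)
    (lam0 : EuclideanSpace ℝ (Fin n))
    (hlam0 : lam0 = gradient G0p uInf - gradient G0 uInf)
    (lam : Fin ng → EuclideanSpace ℝ (Fin n))
    (hlam : ∀ i, lam i = gradient (Gp i) uInf - gradient (G i) uInf)
    (Ghat0 : EuclideanSpace ℝ (Fin n) → ℝ)
    (hGhat0 : ∀ u, Ghat0 u = G0 u + ⟪lam0, u⟫)
    (Ghat : Fin ng → EuclideanSpace ℝ (Fin n) → ℝ)
    (hGhat : ∀ i u, Ghat i u = G i u + ε i + ⟪lam i, u - uInf⟫)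
    (μ : Fin ng → ℝ) (hμ : ∀ i, 0 ≤ μ i) :
    (gradient Ghat0 uInf + ∑ i, μ i • gradient (Ghat i) uInf = 0 ∧
      (∀ i, Ghat i uInf ≤ 0) ∧ (∀ i, μ i * Ghat i uInf = 0)) ↔
    (gradient G0p uInf + ∑ i, μ i • gradient (Gp i) uInf = 0 ∧
      (∀ i, Gp i uInf ≤ 0) ∧ (∀ i, μ i * Gp i uInf = 0)) :=
  modifier_adaptation_KKT_matching_general G0p G0 Gp G uInf hG0 hG ε hε lam0 hlam0 lam hlam Ghat0
    hGhat0 Ghat hGhat μ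
end

section
/- Let G^p, G : ℝ^n → ℝ be continuously differentiable, let η ∈ (0,1], and let (u_k)_{k∈ℕ} be a sequence in ℝ^n converging to u∞. Let (ε_k) in ℝ and (λ_k) in ℝ^n satisfy the filtered modifier updates ε_{k+1} = (1 − η) ε_k + η [G^p(u_k) − G(u_k)] and λ_{k+1} = (1 − η) λ_k + η [∇G^p(u_k) − ∇G(u_k)] for all k. Then ε_k converges to G^p(u∞) − G(u∞) and λ_k converges to ∇G^p(u∞) − ∇G(u∞); that is, upon convergence of the iterates the modifiers satisfy the zeroth- and first-order matching conditions at u∞. -/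
open Filter Topology

/-! Writing `e k = x k - l`, each filter step gives `‖e (k+1)‖ ≤ (1-η) ‖e k‖ + η ‖v k - l‖`: the
error contracts by `1 - η < 1` up to a perturbation that tends to zero, so it tends to zero. Applied
to the value and to the gradient of the plant-model mismatch along `u k`, both of which converge by
continuity (the gradient because the functions are `C¹`), this gives the matching conditions. -/

lemma tendsto_zero_of_le_mul_add {r : ℝ} (hr0 : 0 ≤ r) (hr1 : r < 1) {a b : ℕ → ℝ}
    (ha0 : ∀ k, 0 ≤ a k) (hb : Tendsto b atTop (𝓝 0))
    (hab : ∀ k, a (k + 1) ≤ r * a k + b k) :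
    Tendsto a atTop (𝓝 0) := by
  refine tendsto_order.2 ⟨fun δ hδ => .of_forall fun k => hδ.trans_le (ha0 k), fun δ hδ => ?_⟩
  obtain ⟨c, hc0, rfl⟩ : ∃ c, 0 < c ∧ c + c = δ := ⟨δ / 2, half_pos hδ, add_halves δ⟩
  obtain ⟨N, hN⟩ := eventually_atTop.1
    (hb.eventually (gt_mem_nhds (mul_pos (sub_pos.2 hr1) hc0)))
  -- once `b k < (1 - r) c`, the excess of `a` over `c` contracts geometrically
  have hdecay : ∀ m, a (N + m) - c ≤ r ^ m * (a N - c) := by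
    intro m
    induction m with
    | zero => simp
    | succ m ih =>
      calc a (N + m + 1) - c ≤ r * (a (N + m) - c) := by
            linarith [hab (N + m), hN (N + m) le_self_add]
        _ ≤ r * (r ^ m * (a N - c)) := mul_le_mul_of_nonneg_left ih hr0
        _ = r ^ (m + 1) * (a N - c) := by ring
  have hpow : Tendsto (fun m => r ^ m * (a N - c)) atTop (𝓝 0) := by
    simpa using (tendsto_pow_atTop_nhds_zero_of_lt_one hr0 hr1).mul_const (a N - c)
  obtain ⟨M, hM⟩ := eventually_atTop.1 (hpow.eventually (gt_mem_nhds hc0))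
  filter_upwards [eventually_ge_atTop (N + M)] with k hk
  obtain ⟨m, rfl⟩ := Nat.exists_eq_add_of_le (le_self_add.trans hk)
  linarith [hdecay m, hM m (by omega)]

lemma tendsto_of_exponential_filter {E : Type*} [NormedAddCommGroup E] [NormedSpace ℝ E]
    {η : ℝ} (hη : η ∈ Set.Ioc (0 : ℝ) 1) {v x : ℕ → E} {l : E}
    (hv : Tendsto v atTop (𝓝 l)) (hx : ∀ k, x (k + 1) = (1 - η) • x k + η • v k) :
    Tendsto x atTop (𝓝 l) := by
  obtain ⟨hη0, hη1⟩ := hη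
  have hstep : ∀ k, ‖x (k + 1) - l‖ ≤ (1 - η) * ‖x k - l‖ + η * ‖v k - l‖ := by
    intro k
    have herr : x (k + 1) - l = (1 - η) • (x k - l) + η • (v k - l) := by
      rw [hx]
      module
    rw [herr]
    refine (norm_add_le _ _).trans_eq ?_
    rw [norm_smul, norm_smul, Real.norm_of_nonneg (sub_nonneg.2 hη1), Real.norm_of_nonneg hη0.le]
  rw [tendsto_iff_norm_sub_tendsto_zero] at hv ⊢
  exact tendsto_zero_of_le_mul_add (sub_nonneg.2 hη1) (by linarith) (fun k => norm_nonneg _)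
    (by simpa using hv.const_mul η) hstep

lemma ContDiff.continuous_gradient {F : Type*} [NormedAddCommGroup F] [InnerProductSpace ℝ F]
    [CompleteSpace F] {f : F → ℝ} (hf : ContDiff ℝ 1 f) : Continuous (gradient f) :=
  (InnerProductSpace.toDual ℝ F).symm.continuous.comp (hf.continuous_fderiv one_ne_zero)

/-- Upon convergence of the RTO iterates `u_k → u∞`, the exponentially filtered
zeroth- and first-order modifiers converge to the plant-model mismatch in value
and gradient at `u∞`. -/
theorem filtered_modifiers_satisfy_matching_conditions
    {n : ℕ} (Gp G : EuclideanSpace ℝ (Fin n) → ℝ)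
    (hGp : ContDiff ℝ 1 Gp) (hG : ContDiff ℝ 1 G)
    (η : ℝ) (hη : η ∈ Set.Ioc (0 : ℝ) 1)
    (u : ℕ → EuclideanSpace ℝ (Fin n)) (uInf : EuclideanSpace ℝ (Fin n))
    (hu : Filter.Tendsto u Filter.atTop (nhds uInf))
    (ε : ℕ → ℝ) (lam : ℕ → EuclideanSpace ℝ (Fin n))
    (hε : ∀ k, ε (k + 1) = (1 - η) * ε k + η * (Gp (u k) - G (u k)))
    (hlam : ∀ k, lam (k + 1) =
      (1 - η) • lam k + η • (gradient Gp (u k) - gradient G (u k))) :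
    Filter.Tendsto ε Filter.atTop (nhds (Gp uInf - G uInf)) ∧
    Filter.Tendsto lam Filter.atTop
      (nhds (gradient Gp uInf - gradient G uInf)) := by
  have hvalue : Tendsto (fun k => Gp (u k) - G (u k)) atTop (𝓝 (Gp uInf - G uInf)) :=
    ((hGp.continuous.tendsto uInf).comp hu).sub ((hG.continuous.tendsto uInf).comp hu)
  have hgradient : Tendsto (fun k => gradient Gp (u k) - gradient G (u k)) atTop
      (𝓝 (gradient Gp uInf - gradient G uInf)) :=
    ((hGp.continuous_gradient.tendsto uInf).comp hu).sub
      ((hG.continuous_gradient.tendsto uInf).comp hu)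
  exact ⟨tendsto_of_exponential_filter hη hvalue (by simpa only [smul_eq_mul] using hε),
    tendsto_of_exponential_filter hη hgradient hlam⟩
end

section
/- Let E be a finite-dimensional real inner product space, let u ∈ E, Δ > 0, and let m : E → ℝ be continuously differentiable with ∇m Lipschitz continuous with constant κ > 0 on the closed ball B(u; Δ). If d* is a global minimizer of d ↦ m(u + d) over the closed ball {d : ‖d‖ ≤ Δ}, then the exact trust-region step achieves at least the Cauchy decrease: m(u) − m(u + d*) ≥ (1/2) ‖∇m(u)‖ · min( ‖∇m(u)‖ / κ , Δ ). -/
/-!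
Descent lemma: if `‖∇f y - ∇f x‖ ≤ κ ‖y - x‖` on the segment from `x` to `x + d`, then
`f (x + d) ≤ f x + ⟪∇f x, d⟫ + κ/2 ‖d‖²`, because `t ↦ f (x + t d) - t ⟪∇f x, d⟫ - κ/2 t² ‖d‖²`
is antitone on `[0, 1]`.

The Cauchy point, a step of length `τ = min (‖∇m u‖/κ) Δ` along `-∇m u`, stays in the trust
region, and since `κ τ ≤ ‖∇m u‖` this bound gives it a decrease of at least `τ ‖∇m u‖ / 2`. The exact step does at least as well.
-/

open Set InnerProductSpace

section

variable {E : Type*} [NormedAddCommGroup E] [InnerProductSpace ℝ E]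

theorem hasDerivAt_apply_add_smul [CompleteSpace E] {f : E → ℝ} {x d : E} {t : ℝ}
    (hf : DifferentiableAt ℝ f (x + t • d)) :
    HasDerivAt (fun s : ℝ => f (x + s • d)) ⟪gradient f (x + t • d), d⟫_ℝ t := by
  have hline : HasDerivAt (fun s : ℝ => x + s • d) d t := by
    simpa using ((hasDerivAt_id t).smul_const d).const_add x
  rw [inner_gradient_left]
  exact hf.hasFDerivAt.comp_hasDerivAt t hline

theorem apply_add_le_of_norm_gradient_sub_le [CompleteSpace E] {f : E → ℝ}
    (hf : Differentiable ℝ f) {x d : E} {κ : ℝ}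
    (hLip : ∀ y ∈ segment ℝ x (x + d), ‖gradient f y - gradient f x‖ ≤ κ * ‖y - x‖) :
    f (x + d) ≤ f x + ⟪gradient f x, d⟫_ℝ + κ / 2 * ‖d‖ ^ 2 := by
  set ψ : ℝ → ℝ := fun t => f (x + t • d) - t * ⟪gradient f x, d⟫_ℝ - κ / 2 * t ^ 2 * ‖d‖ ^ 2
  have hψ : ∀ t : ℝ, HasDerivAt ψ
      (⟪gradient f (x + t • d), d⟫_ℝ - ⟪gradient f x, d⟫_ℝ - κ * t * ‖d‖ ^ 2) t := by
    intro t
    refine (((hasDerivAt_apply_add_smul (hf _)).sub ((hasDerivAt_id t).mul_const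
      ⟪gradient f x, d⟫_ℝ)).sub (((hasDerivAt_pow 2 t).const_mul (κ / 2)).mul_const
      (‖d‖ ^ 2))).congr_deriv ?_
    simp only [Nat.cast_ofNat, one_mul]
    ring
  have hψ'_le : ∀ t ∈ interior (Icc (0 : ℝ) 1),
      ⟪gradient f (x + t • d), d⟫_ℝ - ⟪gradient f x, d⟫_ℝ ≤ κ * t * ‖d‖ ^ 2 := by
    intro t ht
    rw [interior_Icc] at ht
    have hy : x + t • d ∈ segment ℝ x (x + d) := by
      rw [segment_eq_image']
      exact ⟨t, Ioo_subset_Icc_self ht, by simp⟩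
    have hdist : ‖x + t • d - x‖ = t * ‖d‖ := by
      rw [add_sub_cancel_left, norm_smul, Real.norm_of_nonneg ht.1.le]
    calc ⟪gradient f (x + t • d), d⟫_ℝ - ⟪gradient f x, d⟫_ℝ
        = ⟪gradient f (x + t • d) - gradient f x, d⟫_ℝ := (inner_sub_left _ _ _).symm
      _ ≤ ‖gradient f (x + t • d) - gradient f x‖ * ‖d‖ := real_inner_le_norm _ _
      _ ≤ κ * (t * ‖d‖) * ‖d‖ := by
          rw [← hdist]; exact mul_le_mul_of_nonneg_right (hLip _ hy) (norm_nonneg d)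
      _ = κ * t * ‖d‖ ^ 2 := by ring
  have hanti : AntitoneOn ψ (Icc 0 1) :=
    antitoneOn_of_hasDerivWithinAt_nonpos (convex_Icc 0 1)
      (fun t _ => (hψ t).continuousAt.continuousWithinAt)
      (fun t _ => (hψ t).hasDerivWithinAt) fun t ht => by linarith [hψ'_le t ht]
  have hψ10 := hanti (left_mem_Icc.2 zero_le_one) (right_mem_Icc.2 zero_le_one) zero_le_one
  simp only [ψ, zero_smul, one_smul, add_zero] at hψ10
  linarith

theorem exists_norm_le_inner_eq_neg_mul_norm (g : E) {τ : ℝ} (hτ : 0 ≤ τ) :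
    ∃ d : E, ‖d‖ ≤ τ ∧ ⟪g, d⟫_ℝ = -(τ * ‖g‖) := by
  refine ⟨-((τ / ‖g‖) • g), ?_, ?_⟩
  · rw [norm_neg, norm_smul, Real.norm_of_nonneg (by positivity)]
    rcases eq_or_ne g 0 with rfl | hg
    · simpa using hτ
    · rw [div_mul_cancel₀ _ (norm_ne_zero_iff.2 hg)]
  · rw [inner_neg_right, real_inner_smul_right, real_inner_self_eq_norm_sq]
    rcases eq_or_ne g 0 with rfl | hg
    · simp
    · field_simp

end

theorem exact_trust_region_step_cauchy_decrease_general
    {E : Type*} [NormedAddCommGroup E] [InnerProductSpace ℝ E]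
    [FiniteDimensional ℝ E]
    (u : E) (Δ : ℝ)
    (m : E → ℝ) (hm : ContDiff ℝ 1 m)
    (κ : ℝ) (hκ : 0 < κ)
    (hLip : ∀ x ∈ Metric.closedBall u Δ, ∀ y ∈ Metric.closedBall u Δ,
      ‖gradient m x - gradient m y‖ ≤ κ * ‖x - y‖)
    (dstar : E) (hdstar : ‖dstar‖ ≤ Δ)
    (hmin : ∀ d : E, ‖d‖ ≤ Δ → m (u + dstar) ≤ m (u + d)) :
    m u - m (u + dstar) ≥
      (1 / 2) * ‖gradient m u‖ * min (‖gradient m u‖ / κ) Δ := by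
  set g := gradient m u
  set τ := min (‖g‖ / κ) Δ
  have hΔ : 0 ≤ Δ := (norm_nonneg dstar).trans hdstar
  have hτ : 0 ≤ τ := le_min (by positivity) hΔ
  have hκτ : κ * τ ≤ ‖g‖ := (le_div_iff₀' hκ).1 (min_le_left _ _)
  obtain ⟨d, hdτ, hgd⟩ := exists_norm_le_inner_eq_neg_mul_norm g hτ
  have hdΔ : ‖d‖ ≤ Δ := hdτ.trans (min_le_right _ _)
  have hu : u ∈ Metric.closedBall u Δ := Metric.mem_closedBall_self hΔ
  have hud : u + d ∈ Metric.closedBall u Δ := by simpa [dist_eq_norm] using hdΔ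
  have hdescent := apply_add_le_of_norm_gradient_sub_le (hm.differentiable one_ne_zero)
    fun y hy => hLip y ((convex_closedBall u Δ).segment_subset hu hud hy) u hu
  have hd_sq : ‖d‖ ^ 2 ≤ τ ^ 2 := pow_le_pow_left₀ (norm_nonneg d) hdτ 2
  have hmin_d := hmin d hdΔ
  nlinarith [mul_le_mul_of_nonneg_right hκτ hτ]

/-- Cauchy decrease of the exact trust-region step: if `d*` globally minimizes the
model `m` over the trust region `{d : ‖d‖ ≤ Δ}` around `u`, and `∇m` is
`κ`-Lipschitz on the closed ball `B(u; Δ)`, then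
`m(u) − m(u + d*) ≥ (1/2) ‖∇m(u)‖ min(‖∇m(u)‖/κ, Δ)`. -/
theorem exact_trust_region_step_cauchy_decrease
    {E : Type*} [NormedAddCommGroup E] [InnerProductSpace ℝ E]
    [FiniteDimensional ℝ E]
    (u : E) (Δ : ℝ) (hΔ : 0 < Δ)
    (m : E → ℝ) (hm : ContDiff ℝ 1 m)
    (κ : ℝ) (hκ : 0 < κ)
    (hLip : ∀ x ∈ Metric.closedBall u Δ, ∀ y ∈ Metric.closedBall u Δ,
      ‖gradient m x - gradient m y‖ ≤ κ * ‖x - y‖)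
    (dstar : E) (hdstar : ‖dstar‖ ≤ Δ)
    (hmin : ∀ d : E, ‖d‖ ≤ Δ → m (u + dstar) ≤ m (u + d)) :
    m u - m (u + dstar) ≥
      (1 / 2) * ‖gradient m u‖ * min (‖gradient m u‖ / κ) Δ :=
  exact_trust_region_step_cauchy_decrease_general u Δ m hm κ hκ hLip dstar hdstar hmin
end

section
/- Let E be a finite-dimensional real inner product space, let f, m : E → ℝ, u ∈ E, Δ > 0, κ_ef > 0, κ > 0, η₂ ∈ (0,1), and write g := ‖∇m(u)‖ with g > 0. Let d ∈ E with ‖d‖ ≤ Δ. Assume: (i) the zeroth-order full-linearity bound |f(u + s) − m(u + s)| ≤ κ_ef Δ² holds for all s with ‖s‖ ≤ Δ (in particular for s = 0 and s = d); (ii) the step achieves the Cauchy decrease m(u) − m(u + d) ≥ (1/2) g min(g/κ, Δ); and (iii) Δ ≤ min( g/κ , g (1 − η₂)/(4 κ_ef) ). Then the accuracy ratio ρ := (f(u) − f(u + d)) / (m(u) − m(u + d)) is well defined (the denominator is positive) and satisfies ρ ≥ η₂; that is, the trust-region iteration is successful. -/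
/-!
Since `Δ ≤ g / κ`, the Cauchy decrease says the predicted reduction is at least `g Δ / 2`.
Full linearity at `u` and `u + d` makes the actual reduction differ from the predicted one by at
most `2 κ_ef Δ²`, and the smallness of `Δ` makes this error at most a fraction `1 - η₂` of the
predicted reduction, so `ρ ≥ 1 - (1 - η₂) = η₂`.
-/

theorem le_reduction_ratio_of_abs_sub_le {f₀ f₁ m₀ m₁ ε η : ℝ} (hpred : 0 < m₀ - m₁)
    (h₀ : |f₀ - m₀| ≤ ε) (h₁ : |f₁ - m₁| ≤ ε) (hε : 2 * ε ≤ (1 - η) * (m₀ - m₁)) :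
    η ≤ (f₀ - f₁) / (m₀ - m₁) := by
  rw [le_div_iff₀ hpred]
  linarith [abs_le.mp h₀, abs_le.mp h₁]

theorem two_mul_mul_sq_le_of_le_div {κ Δ g η D : ℝ} (hκ : 0 < κ) (hΔ : 0 ≤ Δ) (hη : η ≤ 1)
    (hΔsmall : Δ ≤ g * (1 - η) / (4 * κ)) (hD : 1 / 2 * g * Δ ≤ D) :
    2 * (κ * Δ ^ 2) ≤ (1 - η) * D := by
  have hΔκ : Δ * (4 * κ) ≤ g * (1 - η) := (le_div_iff₀ (by positivity)).mp hΔsmall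
  calc 2 * (κ * Δ ^ 2) = Δ * (4 * κ) * Δ / 2 := by ring
    _ ≤ g * (1 - η) * Δ / 2 := by gcongr
    _ = (1 - η) * (1 / 2 * g * Δ) := by ring
    _ ≤ (1 - η) * D := by gcongr

theorem small_trust_region_iteration_successful_general
    {E : Type*} [NormedAddCommGroup E]
    (f m : E → ℝ) (u : E) (Δ κef κ η₂ : ℝ)
    (hΔ : 0 < Δ) (hκef : 0 < κef)
    (hη₂ : η₂ ∈ Set.Ioo (0 : ℝ) 1)
    (g : ℝ) (hgpos : 0 < g)
    (d : E) (hd : ‖d‖ ≤ Δ)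
    (hfl : ∀ s : E, ‖s‖ ≤ Δ → |f (u + s) - m (u + s)| ≤ κef * Δ ^ 2)
    (hcauchy : m u - m (u + d) ≥ (1 / 2) * g * min (g / κ) Δ)
    (hΔsmall : Δ ≤ min (g / κ) (g * (1 - η₂) / (4 * κef))) :
    0 < m u - m (u + d) ∧
      (f u - f (u + d)) / (m u - m (u + d)) ≥ η₂ := by
  have hpred : 1 / 2 * g * Δ ≤ m u - m (u + d) := by
    rwa [min_eq_right (hΔsmall.trans (min_le_left _ _))] at hcauchy
  have hpred_pos : 0 < m u - m (u + d) := lt_of_lt_of_le (by positivity) hpred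
  have hfl₀ : |f u - m u| ≤ κef * Δ ^ 2 := by simpa using hfl 0 (by simpa using hΔ.le)
  refine ⟨hpred_pos, le_reduction_ratio_of_abs_sub_le hpred_pos hfl₀ (hfl d hd) ?_⟩
  exact two_mul_mul_sq_le_of_le_div hκef hΔ.le hη₂.2.le (hΔsmall.trans (min_le_right _ _)) hpred

/-- If the model is zeroth-order fully linear on the trust region, the step achieves the
Cauchy decrease, and the trust-region radius is sufficiently small compared to the model
gradient norm, then the accuracy ratio is well defined and the iteration is successful
(`ρ ≥ η₂`). -/
theorem small_trust_region_iteration_successful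
    {E : Type*} [NormedAddCommGroup E] [InnerProductSpace ℝ E]
    [FiniteDimensional ℝ E]
    (f m : E → ℝ) (u : E) (Δ κef κ η₂ : ℝ)
    (hΔ : 0 < Δ) (hκef : 0 < κef) (hκ : 0 < κ)
    (hη₂ : η₂ ∈ Set.Ioo (0 : ℝ) 1)
    (g : ℝ) (hg : g = ‖gradient m u‖) (hgpos : 0 < g)
    (d : E) (hd : ‖d‖ ≤ Δ)
    (hfl : ∀ s : E, ‖s‖ ≤ Δ → |f (u + s) - m (u + s)| ≤ κef * Δ ^ 2)
    (hcauchy : m u - m (u + d) ≥ (1 / 2) * g * min (g / κ) Δ)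
    (hΔsmall : Δ ≤ min (g / κ) (g * (1 - η₂) / (4 * κef))) :
    0 < m u - m (u + d) ∧
      (f u - f (u + d)) / (m u - m (u + d)) ≥ η₂ :=
  small_trust_region_iteration_successful_general f m u Δ κef κ η₂ hΔ hκef hη₂ g hgpos d hd hfl
    hcauchy hΔsmall
end

section
/- Consider the trust-region modifier-adaptation iteration for an unconstrained problem with noiseless measurements. Let E be a finite-dimensional real inner product space and f : E → ℝ be continuously differentiable with ∇f Lipschitz continuous with constant L > 0 on E and f bounded from below on E. Fix constants 0 < η₁ < η₂ < 1, 0 < γ_red < 1 < γ_inc, μ > 0, Δ_max > 0, κ_ef > 0, κ_eg > 0, κ_bhm > 0. Let (u_k) in E, (Δ_k) with 0 < Δ_k ≤ Δ_max, models m_k : E → ℝ continuously differentiable with ∇m_k Lipschitz with constant κ_bhm, and steps d_k ∈ E satisfy, for every k: (i) full linearity of m_k for f on B(u_k; Δ_k): for all d with ‖d‖ ≤ Δ_k, ‖∇f(u_k + d) − ∇m_k(u_k + d)‖ ≤ κ_eg Δ_k and |f(u_k + d) − m_k(u_k + d)| ≤ κ_ef Δ_k²; (ii) the criticality condition Δ_k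 ≤ μ ‖∇m_k(u_k)‖; (iii) d_k is a global minimizer of d ↦ m_k(u_k + d) over the closed ball {d : ‖d‖ ≤ Δ_k}; (iv) with ρ_k := (f(u_k) − f(u_k + d_k)) / (m_k(u_k) − m_k(u_k + d_k)), the updates u_{k+1} = u_k + d_k if ρ_k ≥ η₁ and u_{k+1} = u_k otherwise, and Δ_{k+1} = min(γ_inc Δ_k, Δ_max) if ρ_k > η₂ and ‖d_k‖ = Δ_k, Δ_{k+1} = γ_red Δ_k if ρ_k < η₁, and Δ_{k+1} = Δ_k otherwise. Then lim inf_{k→∞} ‖∇f(u_k)‖ = 0; that is, some subsequence of the iterates is asymptotically first-order critical. -/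
/-!
If `‖∇f(u_k)‖ ≥ ε` for all large `k`, full linearity and the criticality condition
`Δ_k ≤ μ ‖∇m_k(u_k)‖` keep the model gradients above `c = ε / (1 + κ_eg μ)`. The Cauchy decrease
then makes the predicted reduction at least of order `c · min(Δ_k, c / κ_bhm)`, while full
linearity bounds the gap between actual and predicted reduction by `2 κ_ef Δ_k²`; hence every step
with small radius is successful and the radii stay bounded away from `0`. Each successful step then
lowers `f` by a fixed amount, so, `f` being bounded below, all late steps are rejected and the
radii shrink geometrically to `0`: a contradiction.
-/

open Filter Topology InnerProductSpace Set

theorem liminf_eq_zero_of_frequently_lt {ι : Type*} {l : Filter ι} {x : ι → ℝ}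
    (hx : ∀ i, 0 ≤ x i) (h : ∀ ε > 0, ∃ᶠ i in l, x i < ε) : liminf x l = 0 := by
  have hfreq_le : ∀ ε > 0, ∃ᶠ i in l, x i ≤ ε := fun ε hε => (h ε hε).mono fun _ => le_of_lt
  refine le_antisymm (le_of_forall_pos_le_add fun ε hε => ?_) ?_
  · rw [zero_add]
    exact liminf_le_of_frequently_le (hfreq_le ε hε) (isBoundedUnder_of ⟨0, hx⟩)
  · exact le_liminf_of_le (IsCoboundedUnder.of_frequently_le (hfreq_le 1 one_pos))
      (Eventually.of_forall hx)

theorem Antitone.eventually_sub_succ_lt {F : ℕ → ℝ} (hF : Antitone F) (hbdd : BddBelow (range F))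
    {δ : ℝ} (hδ : 0 < δ) : ∀ᶠ k in atTop, F k - F (k + 1) < δ := by
  have hlim := tendsto_atTop_ciInf hF hbdd
  have hdiff : Tendsto (fun k => F k - F (k + 1)) atTop (𝓝 0) := by
    simpa using hlim.sub (hlim.comp (tendsto_add_atTop_nat 1))
  exact hdiff.eventually (gt_mem_nhds hδ)

theorem exists_pos_eventually_le_of_min_le_succ {x : ℕ → ℝ} (hx : ∀ k, 0 < x k) {b : ℝ}
    (hb : 0 < b) (h : ∀ᶠ k in atTop, min (x k) b ≤ x (k + 1)) :
    ∃ lo > 0, ∀ᶠ k in atTop, lo ≤ x k := by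
  obtain ⟨N, hN⟩ := eventually_atTop.mp h
  refine ⟨min (x N) b, lt_min (hx N) hb, eventually_atTop.mpr ⟨N, fun k hk => ?_⟩⟩
  induction k, hk using Nat.le_induction with
  | base => exact min_le_left _ _
  | succ k hk ih => exact (le_min ih (min_le_right _ _)).trans (hN k hk)

theorem tendsto_zero_of_eventually_succ_eq_mul {x : ℕ → ℝ} {γ : ℝ} (hγ0 : 0 ≤ γ) (hγ1 : γ < 1)
    (h : ∀ᶠ k in atTop, x (k + 1) = γ * x k) : Tendsto x atTop (𝓝 0) := by
  obtain ⟨N, hN⟩ := eventually_atTop.mp h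
  have hgeom : ∀ j, x (j + N) = γ ^ j * x N := by
    intro j
    induction j with
    | zero => simp
    | succ j ih => rw [add_right_comm, hN _ (Nat.le_add_left N j), ih, pow_succ]; ring
  rw [← tendsto_add_atTop_iff_nat N]
  simpa [hgeom] using (tendsto_pow_atTop_nhds_zero_of_lt_one hγ0 hγ1).mul_const (x N)

section Descent

variable {E : Type*} [NormedAddCommGroup E] [InnerProductSpace ℝ E]

theorem exists_norm_le_inner_eq_neg (g : E) {t : ℝ} (ht : 0 ≤ t) :
    ∃ v : E, ‖v‖ ≤ t ∧ ⟪g, v⟫_ℝ = -(t * ‖g‖) := by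
  rcases eq_or_ne g 0 with rfl | hg
  · exact ⟨0, by simpa using ht, by simp⟩
  · refine ⟨-((t / ‖g‖) • g), ?_, ?_⟩
    · rw [norm_neg, norm_smul, Real.norm_of_nonneg (by positivity),
        div_mul_cancel₀ _ (norm_ne_zero_iff.mpr hg)]
    · rw [inner_neg_right, real_inner_smul_right, real_inner_self_eq_norm_sq]
      field_simp

variable [CompleteSpace E] {h : E → ℝ} {K : ℝ}

theorem le_add_inner_gradient_add_mul_norm_sq (hh : Differentiable ℝ h) (hK : 0 ≤ K)
    (hLip : ∀ x y, ‖gradient h x - gradient h y‖ ≤ K * ‖x - y‖) (x s : E) :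
    h (x + s) ≤ h x + ⟪gradient h x, s⟫_ℝ + K * ‖s‖ ^ 2 := by
  have hbound : ∀ z ∈ Metric.closedBall x ‖s‖, ‖fderiv ℝ h z - fderiv ℝ h x‖ ≤ K * ‖s‖ := by
    intro z hz
    rw [← toDual_gradient, ← toDual_gradient, ← map_sub, LinearIsometryEquiv.norm_map]
    exact (hLip z x).trans (mul_le_mul_of_nonneg_left (mem_closedBall_iff_norm.mp hz) hK)
  have hmv := (convex_closedBall x ‖s‖).norm_image_sub_le_of_norm_fderiv_le' (y := x + s)
    (fun z _ => hh z) hbound (Metric.mem_closedBall_self (norm_nonneg s)) (by simp)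
  rw [add_sub_cancel_left, ← inner_gradient_left, Real.norm_eq_abs] at hmv
  linarith [(abs_le.mp hmv).2]

/-- Cauchy decrease: a global minimiser over the ball of radius `Δ` does at least as well as the
best steepest-descent step. -/
theorem cauchy_decrease_le_of_minimizer (hh : Differentiable ℝ h) (hK : 0 < K)
    (hLip : ∀ x y, ‖gradient h x - gradient h y‖ ≤ K * ‖x - y‖) {x s : E} {Δ c : ℝ}
    (hΔ : 0 ≤ Δ) (hmin : ∀ t : E, ‖t‖ ≤ Δ → h (x + s) ≤ h (x + t)) (hc : 0 ≤ c)
    (hcg : c ≤ ‖gradient h x‖) :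
    c * min Δ (c / (2 * K)) / 2 ≤ h x - h (x + s) := by
  set t := min Δ (c / (2 * K))
  have ht : 0 ≤ t := le_min hΔ (by positivity)
  have hKt : K * t ≤ c / 2 := by
    calc K * t ≤ K * (c / (2 * K)) := mul_le_mul_of_nonneg_left (min_le_right _ _) hK.le
      _ = c / 2 := by field_simp
  obtain ⟨v, hv, hinner⟩ := exists_norm_le_inner_eq_neg (gradient h x) ht
  have hdesc := le_add_inner_gradient_add_mul_norm_sq hh hK.le hLip x v
  have hsv := hmin v (hv.trans (min_le_left _ _))
  have hv2 : K * ‖v‖ ^ 2 ≤ K * t ^ 2 := by gcongr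
  nlinarith [mul_le_mul_of_nonneg_left hcg ht]

end Descent

structure IsTrustRegionMA {E : Type*} [NormedAddCommGroup E] [InnerProductSpace ℝ E]
    [CompleteSpace E] (f : E → ℝ) (η₁ η₂ γred γinc μ Δmax κef κeg κbhm : ℝ)
    (u : ℕ → E) (Δ : ℕ → ℝ) (m : ℕ → E → ℝ) (d : ℕ → E) (ρ : ℕ → ℝ) : Prop where
  radius_pos : ∀ k, 0 < Δ k
  radius_le_max : ∀ k, Δ k ≤ Δmax
  model_differentiable : ∀ k, Differentiable ℝ (m k)
  model_gradient_lipschitz : ∀ k x y, ‖gradient (m k) x - gradient (m k) y‖ ≤ κbhm * ‖x - y‖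
  norm_gradient_sub_le : ∀ k s, ‖s‖ ≤ Δ k →
    ‖gradient f (u k + s) - gradient (m k) (u k + s)‖ ≤ κeg * Δ k
  abs_sub_le : ∀ k s, ‖s‖ ≤ Δ k → |f (u k + s) - m k (u k + s)| ≤ κef * Δ k ^ 2
  criticality : ∀ k, Δ k ≤ μ * ‖gradient (m k) (u k)‖
  norm_step_le : ∀ k, ‖d k‖ ≤ Δ k
  step_minimizes : ∀ k s, ‖s‖ ≤ Δ k → m k (u k + d k) ≤ m k (u k + s)
  ratio_eq : ∀ k, ρ k = (f (u k) - f (u k + d k)) / (m k (u k) - m k (u k + d k))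
  accept : ∀ k, η₁ ≤ ρ k → u (k + 1) = u k + d k
  reject : ∀ k, ρ k < η₁ → u (k + 1) = u k
  radius_increase : ∀ k, η₂ < ρ k ∧ ‖d k‖ = Δ k → Δ (k + 1) = min (γinc * Δ k) Δmax
  radius_reduce : ∀ k, ρ k < η₁ → Δ (k + 1) = γred * Δ k
  radius_keep : ∀ k, ¬(η₂ < ρ k ∧ ‖d k‖ = Δ k) → ¬(ρ k < η₁) → Δ (k + 1) = Δ k

namespace IsTrustRegionMA

variable {E : Type*} [NormedAddCommGroup E] [InnerProductSpace ℝ E] [CompleteSpace E]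
  {f : E → ℝ} {η₁ η₂ γred γinc μ Δmax κef κeg κbhm : ℝ}
  {u : ℕ → E} {Δ : ℕ → ℝ} {m : ℕ → E → ℝ} {d : ℕ → E} {ρ : ℕ → ℝ}
  (hT : IsTrustRegionMA f η₁ η₂ γred γinc μ Δmax κef κeg κbhm u Δ m d ρ)
include hT

theorem model_gradient_pos (k : ℕ) : 0 < ‖gradient (m k) (u k)‖ := by
  refine (norm_nonneg _).lt_of_ne fun h0 => ?_
  have := (hT.radius_pos k).trans_le (hT.criticality k)
  rw [← h0, mul_zero] at this
  exact this.false

theorem cauchy_decrease (hK : 0 < κbhm) (k : ℕ) {c : ℝ} (hc : 0 ≤ c)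
    (hcg : c ≤ ‖gradient (m k) (u k)‖) :
    c * min (Δ k) (c / (2 * κbhm)) / 2 ≤ m k (u k) - m k (u k + d k) :=
  cauchy_decrease_le_of_minimizer (hT.model_differentiable k) hK (hT.model_gradient_lipschitz k)
    (hT.radius_pos k).le (hT.step_minimizes k) hc hcg

theorem predicted_pos (hK : 0 < κbhm) (k : ℕ) : 0 < m k (u k) - m k (u k + d k) := by
  have hg := hT.model_gradient_pos k
  have hmin : 0 < min (Δ k) (‖gradient (m k) (u k)‖ / (2 * κbhm)) :=
    lt_min (hT.radius_pos k) (by positivity)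
  exact (by positivity : (0 : ℝ) < _).trans_le (hT.cauchy_decrease hK k hg.le le_rfl)

theorem actual_eq_ratio_mul (hK : 0 < κbhm) (k : ℕ) :
    f (u k) - f (u k + d k) = ρ k * (m k (u k) - m k (u k + d k)) := by
  rw [hT.ratio_eq k, div_mul_cancel₀ _ (hT.predicted_pos hK k).ne']

theorem abs_actual_sub_predicted_le (k : ℕ) :
    |(f (u k) - f (u k + d k)) - (m k (u k) - m k (u k + d k))| ≤ 2 * κef * Δ k ^ 2 := by
  have h0 := hT.abs_sub_le k 0 (by simpa using (hT.radius_pos k).le)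
  have hd := hT.abs_sub_le k (d k) (hT.norm_step_le k)
  rw [add_zero] at h0
  calc _ = |(f (u k) - m k (u k)) - (f (u k + d k) - m k (u k + d k))| := by ring_nf
    _ ≤ |f (u k) - m k (u k)| + |f (u k + d k) - m k (u k + d k)| := abs_sub _ _
    _ ≤ 2 * κef * Δ k ^ 2 := by linarith

/-- The gap between actual and predicted reduction is `O(Δ_k²)`, the predicted reduction is
at least `c Δ_k / 2`. -/
theorem le_ratio_of_radius_le (hK : 0 < κbhm) (hκef : 0 < κef) (hη₁ : η₁ < 1) (k : ℕ)
    {c : ℝ} (hc : 0 < c) (hcg : c ≤ ‖gradient (m k) (u k)‖)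
    (hΔ : Δ k ≤ min (c / (2 * κbhm)) ((1 - η₁) * c / (4 * κef))) : η₁ ≤ ρ k := by
  set pred := m k (u k) - m k (u k + d k)
  have hpred : c * Δ k / 2 ≤ pred := by
    have := hT.cauchy_decrease hK k hc.le hcg
    rwa [min_eq_left (hΔ.trans (min_le_left _ _))] at this
  have herr : 2 * κef * Δ k ^ 2 ≤ (1 - η₁) * (c * Δ k / 2) := by
    have h := (le_div_iff₀ (by positivity)).mp (hΔ.trans (min_le_right _ _))
    nlinarith [hT.radius_pos k]
  have hactual := hT.actual_eq_ratio_mul hK k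
  have hclose := (abs_le.mp (hT.abs_actual_sub_predicted_le k)).1
  nlinarith [hT.predicted_pos hK k]

theorem objective_succ_add_le (hK : 0 < κbhm) (k : ℕ) (hacc : η₁ ≤ ρ k) :
    f (u (k + 1)) + η₁ * (m k (u k) - m k (u k + d k)) ≤ f (u k) := by
  rw [hT.accept k hacc]
  nlinarith [hT.actual_eq_ratio_mul hK k,
    mul_le_mul_of_nonneg_right hacc (hT.predicted_pos hK k).le]

theorem objective_antitone (hK : 0 < κbhm) (hη₁ : 0 ≤ η₁) : Antitone fun k => f (u k) := by
  refine antitone_nat_of_succ_le fun k => ?_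
  by_cases hacc : η₁ ≤ ρ k
  · nlinarith [hT.objective_succ_add_le hK k hacc, mul_nonneg hη₁ (hT.predicted_pos hK k).le]
  · rw [hT.reject k (not_le.mp hacc)]

theorem radius_le_succ_of_not_lt (hγinc : 1 ≤ γinc) (k : ℕ) (hacc : ¬ρ k < η₁) :
    Δ k ≤ Δ (k + 1) := by
  by_cases hinc : η₂ < ρ k ∧ ‖d k‖ = Δ k
  · rw [hT.radius_increase k hinc]
    exact le_min (le_mul_of_one_le_left (hT.radius_pos k).le hγinc) (hT.radius_le_max k)
  · rw [hT.radius_keep k hinc hacc]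

theorem exists_pos_eventually_radius_ge (hK : 0 < κbhm) (hκef : 0 < κef) (hη₁ : η₁ < 1)
    (hγred : 0 < γred) (hγinc : 1 ≤ γinc) {c : ℝ} (hc : 0 < c)
    (hg : ∀ᶠ k in atTop, c ≤ ‖gradient (m k) (u k)‖) : ∃ lo > 0, ∀ᶠ k in atTop, lo ≤ Δ k := by
  set τ := min (c / (2 * κbhm)) ((1 - η₁) * c / (4 * κef))
  have hτ : 0 < τ :=
    lt_min (by positivity) (div_pos (mul_pos (sub_pos.mpr hη₁) hc) (by positivity))
  refine exists_pos_eventually_le_of_min_le_succ hT.radius_pos (mul_pos hγred hτ) ?_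
  filter_upwards [hg] with k hk
  by_cases hrej : ρ k < η₁
  · have hτΔ : τ < Δ k := lt_of_not_ge fun hle =>
      hrej.not_ge (hT.le_ratio_of_radius_le hK hκef hη₁ k hc hk hle)
    rw [hT.radius_reduce k hrej]
    exact (min_le_right _ _).trans (mul_le_mul_of_nonneg_left hτΔ.le hγred.le)
  · exact (min_le_left _ _).trans (hT.radius_le_succ_of_not_lt hγinc k hrej)

/-- Once the radii are bounded below, successful steps lower `f` by a fixed amount, which
a function bounded below only allows finitely often. -/
theorem eventually_rejected (hK : 0 < κbhm) (hκef : 0 < κef) (hη₁ : 0 < η₁) (hη₁1 : η₁ < 1)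
    (hγred : 0 < γred) (hγinc : 1 ≤ γinc) (hbdd : BddBelow (range f)) {c : ℝ} (hc : 0 < c)
    (hg : ∀ᶠ k in atTop, c ≤ ‖gradient (m k) (u k)‖) : ∀ᶠ k in atTop, ρ k < η₁ := by
  obtain ⟨lo, hlo, hΔlo⟩ := hT.exists_pos_eventually_radius_ge hK hκef hη₁1 hγred hγinc hc hg
  set pmin := c * min lo (c / (2 * κbhm)) / 2 with hpmin_def
  have hpmin : 0 < pmin := by
    have : 0 < min lo (c / (2 * κbhm)) := lt_min hlo (by positivity)
    positivity
  have hdrop := (hT.objective_antitone hK hη₁.le).eventually_sub_succ_lt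
    (hbdd.mono (range_comp_subset_range u f)) (mul_pos hη₁ hpmin)
  filter_upwards [hg, hΔlo, hdrop] with k hgk hΔk hdropk
  by_contra hacc
  have hpred : pmin ≤ m k (u k) - m k (u k + d k) :=
    le_trans (by rw [hpmin_def]; gcongr) (hT.cauchy_decrease hK k hc.le hgk)
  nlinarith [hT.objective_succ_add_le hK k (not_lt.mp hacc)]

theorem frequently_norm_model_gradient_lt (hK : 0 < κbhm) (hκef : 0 < κef) (hη₁ : 0 < η₁)
    (hη₁1 : η₁ < 1) (hγred : 0 < γred) (hγred1 : γred < 1) (hγinc : 1 ≤ γinc)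
    (hbdd : BddBelow (range f)) {c : ℝ} (hc : 0 < c) :
    ∃ᶠ k in atTop, ‖gradient (m k) (u k)‖ < c := by
  by_contra hfreq
  have hg : ∀ᶠ k in atTop, c ≤ ‖gradient (m k) (u k)‖ := by
    simpa only [not_frequently, not_lt] using hfreq
  obtain ⟨lo, hlo, hΔlo⟩ := hT.exists_pos_eventually_radius_ge hK hκef hη₁1 hγred hγinc hc hg
  have hshrink : Tendsto Δ atTop (𝓝 0) := tendsto_zero_of_eventually_succ_eq_mul hγred.le hγred1
    ((hT.eventually_rejected hK hκef hη₁ hη₁1 hγred hγinc hbdd hc hg).mono hT.radius_reduce)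
  obtain ⟨k, hlok, hklo⟩ := (hΔlo.and (hshrink.eventually (gt_mem_nhds hlo))).exists
  exact (hlok.trans_lt hklo).false

theorem norm_gradient_le (hκeg : 0 ≤ κeg) (k : ℕ) :
    ‖gradient f (u k)‖ ≤ (1 + κeg * μ) * ‖gradient (m k) (u k)‖ := by
  have h0 := hT.norm_gradient_sub_le k 0 (by simpa using (hT.radius_pos k).le)
  rw [add_zero] at h0
  calc ‖gradient f (u k)‖
      ≤ ‖gradient (m k) (u k)‖ + ‖gradient f (u k) - gradient (m k) (u k)‖ :=
        norm_le_norm_add_norm_sub' _ _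
    _ ≤ ‖gradient (m k) (u k)‖ + κeg * (μ * ‖gradient (m k) (u k)‖) := by
        gcongr
        exact h0.trans (mul_le_mul_of_nonneg_left (hT.criticality k) hκeg)
    _ = (1 + κeg * μ) * ‖gradient (m k) (u k)‖ := by ring

theorem liminf_norm_gradient_eq_zero (hK : 0 < κbhm) (hκef : 0 < κef) (hκeg : 0 ≤ κeg)
    (hμ : 0 ≤ μ) (hη₁ : 0 < η₁) (hη₁1 : η₁ < 1) (hγred : 0 < γred) (hγred1 : γred < 1)
    (hγinc : 1 ≤ γinc) (hbdd : BddBelow (range f)) :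
    liminf (fun k => ‖gradient f (u k)‖) atTop = 0 := by
  refine liminf_eq_zero_of_frequently_lt (fun k => norm_nonneg _) fun ε hε => ?_
  have hC : 0 < 1 + κeg * μ := by positivity
  refine (hT.frequently_norm_model_gradient_lt hK hκef hη₁ hη₁1 hγred hγred1 hγinc hbdd
    (div_pos hε hC)).mono fun k hk => ?_
  calc ‖gradient f (u k)‖ ≤ (1 + κeg * μ) * ‖gradient (m k) (u k)‖ := hT.norm_gradient_le hκeg k
    _ < (1 + κeg * μ) * (ε / (1 + κeg * μ)) := mul_lt_mul_of_pos_left hk hC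
    _ = ε := mul_div_cancel₀ _ hC.ne'

end IsTrustRegionMA

theorem trust_region_MA_liminf_convergence_general
    {E : Type*} [NormedAddCommGroup E] [InnerProductSpace ℝ E]
    [FiniteDimensional ℝ E]
    (f : E → ℝ)
    (hfbdd : BddBelow (Set.range f))
    (η₁ η₂ γred γinc μ Δmax κef κeg κbhm : ℝ)
    (hη₁ : 0 < η₁) (hη₁₂ : η₁ < η₂) (hη₂ : η₂ < 1)
    (hγred : 0 < γred) (hγred1 : γred < 1) (hγinc : 1 < γinc)
    (hμ : 0 < μ)
    (hκef : 0 < κef) (hκeg : 0 < κeg) (hκbhm : 0 < κbhm)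
    (u : ℕ → E) (Δ : ℕ → ℝ) (m : ℕ → E → ℝ) (d : ℕ → E) (ρ : ℕ → ℝ)
    (hΔpos : ∀ k, 0 < Δ k) (hΔle : ∀ k, Δ k ≤ Δmax)
    (hm : ∀ k, ContDiff ℝ 1 (m k))
    (hmLip : ∀ k, ∀ x y : E,
      ‖gradient (m k) x - gradient (m k) y‖ ≤ κbhm * ‖x - y‖)
    (hfl_g : ∀ k, ∀ s : E, ‖s‖ ≤ Δ k →
      ‖gradient f (u k + s) - gradient (m k) (u k + s)‖ ≤ κeg * Δ k)
    (hfl_f : ∀ k, ∀ s : E, ‖s‖ ≤ Δ k →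
      |f (u k + s) - m k (u k + s)| ≤ κef * Δ k ^ 2)
    (hcrit : ∀ k, Δ k ≤ μ * ‖gradient (m k) (u k)‖)
    (hdle : ∀ k, ‖d k‖ ≤ Δ k)
    (hdmin : ∀ k, ∀ s : E, ‖s‖ ≤ Δ k → m k (u k + d k) ≤ m k (u k + s))
    (hρ : ∀ k, ρ k =
      (f (u k) - f (u k + d k)) / (m k (u k) - m k (u k + d k)))
    (hu_acc : ∀ k, η₁ ≤ ρ k → u (k + 1) = u k + d k)
    (hu_rej : ∀ k, ρ k < η₁ → u (k + 1) = u k)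
    (hΔ_inc : ∀ k, η₂ < ρ k ∧ ‖d k‖ = Δ k →
      Δ (k + 1) = min (γinc * Δ k) Δmax)
    (hΔ_red : ∀ k, ρ k < η₁ → Δ (k + 1) = γred * Δ k)
    (hΔ_keep : ∀ k, ¬(η₂ < ρ k ∧ ‖d k‖ = Δ k) → ¬(ρ k < η₁) →
      Δ (k + 1) = Δ k) :
    Filter.liminf (fun k => ‖gradient f (u k)‖) Filter.atTop = 0 := by
  have hT : IsTrustRegionMA f η₁ η₂ γred γinc μ Δmax κef κeg κbhm u Δ m d ρ :=
    ⟨hΔpos, hΔle, fun k => (hm k).differentiable one_ne_zero, hmLip, hfl_g, hfl_f, hcrit, hdle,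
      hdmin, hρ, hu_acc, hu_rej, hΔ_inc, hΔ_red, hΔ_keep⟩
  exact hT.liminf_norm_gradient_eq_zero hκbhm hκef hκeg.le hμ.le hη₁ (hη₁₂.trans hη₂) hγred
    hγred1 hγinc.le hfbdd

/-- Global convergence (liminf version) of the trust-region modifier-adaptation iteration
for an unconstrained problem with noiseless measurements: under full linearity of the
models, the criticality condition, exact global solution of the trust-region subproblems,
and the standard trust-region acceptance/radius-update rules, some subsequence of the
iterates is asymptotically first-order critical. -/
theorem trust_region_MA_liminf_convergence
    {E : Type*} [NormedAddCommGroup E] [InnerProductSpace ℝ E]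
    [FiniteDimensional ℝ E]
    (f : E → ℝ) (hf : ContDiff ℝ 1 f)
    (L : ℝ) (hL : 0 < L)
    (hfLip : ∀ x y : E, ‖gradient f x - gradient f y‖ ≤ L * ‖x - y‖)
    (hfbdd : BddBelow (Set.range f))
    (η₁ η₂ γred γinc μ Δmax κef κeg κbhm : ℝ)
    (hη₁ : 0 < η₁) (hη₁₂ : η₁ < η₂) (hη₂ : η₂ < 1)
    (hγred : 0 < γred) (hγred1 : γred < 1) (hγinc : 1 < γinc)
    (hμ : 0 < μ) (hΔmax : 0 < Δmax)
    (hκef : 0 < κef) (hκeg : 0 < κeg) (hκbhm : 0 < κbhm)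
    (u : ℕ → E) (Δ : ℕ → ℝ) (m : ℕ → E → ℝ) (d : ℕ → E) (ρ : ℕ → ℝ)
    (hΔpos : ∀ k, 0 < Δ k) (hΔle : ∀ k, Δ k ≤ Δmax)
    (hm : ∀ k, ContDiff ℝ 1 (m k))
    (hmLip : ∀ k, ∀ x y : E,
      ‖gradient (m k) x - gradient (m k) y‖ ≤ κbhm * ‖x - y‖)
    (hfl_g : ∀ k, ∀ s : E, ‖s‖ ≤ Δ k →
      ‖gradient f (u k + s) - gradient (m k) (u k + s)‖ ≤ κeg * Δ k)
    (hfl_f : ∀ k, ∀ s : E, ‖s‖ ≤ Δ k →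
      |f (u k + s) - m k (u k + s)| ≤ κef * Δ k ^ 2)
    (hcrit : ∀ k, Δ k ≤ μ * ‖gradient (m k) (u k)‖)
    (hdle : ∀ k, ‖d k‖ ≤ Δ k)
    (hdmin : ∀ k, ∀ s : E, ‖s‖ ≤ Δ k → m k (u k + d k) ≤ m k (u k + s))
    (hρ : ∀ k, ρ k =
      (f (u k) - f (u k + d k)) / (m k (u k) - m k (u k + d k)))
    (hu_acc : ∀ k, η₁ ≤ ρ k → u (k + 1) = u k + d k)
    (hu_rej : ∀ k, ρ k < η₁ → u (k + 1) = u k)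
    (hΔ_inc : ∀ k, η₂ < ρ k ∧ ‖d k‖ = Δ k →
      Δ (k + 1) = min (γinc * Δ k) Δmax)
    (hΔ_red : ∀ k, ρ k < η₁ → Δ (k + 1) = γred * Δ k)
    (hΔ_keep : ∀ k, ¬(η₂ < ρ k ∧ ‖d k‖ = Δ k) → ¬(ρ k < η₁) →
      Δ (k + 1) = Δ k) :
    Filter.liminf (fun k => ‖gradient f (u k)‖) Filter.atTop = 0 :=
  trust_region_MA_liminf_convergence_general f hfbdd η₁ η₂ γred γinc μ Δmax κef κeg κbhm hη₁ hη₁₂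
    hη₂ hγred hγred1 hγinc hμ hκef hκeg hκbhm u Δ m d ρ hΔpos hΔle hm hmLip hfl_g hfl_f hcrit hdle
    hdmin hρ hu_acc hu_rej hΔ_inc hΔ_red hΔ_keep
end

section
/- Consider the trust-region modifier-adaptation iteration for an unconstrained problem with noiseless measurements. Let E be a finite-dimensional real inner product space and f : E → ℝ be continuously differentiable with ∇f Lipschitz continuous with constant L > 0 on E and f bounded from below on E. Fix constants 0 < η₁ < η₂ < 1, 0 < γ_red < 1 < γ_inc, μ > 0, Δ_max > 0, κ_ef > 0, κ_eg > 0, κ_bhm > 0. Let (u_k) in E, (Δ_k) with 0 < Δ_k ≤ Δ_max, models m_k : E → ℝ continuously differentiable with ∇m_k Lipschitz with constant κ_bhm, and steps d_k ∈ E satisfy, for every k: (i) full linearity of m_k for f on B(u_k; Δ_k): for all d with ‖d‖ ≤ Δ_k, ‖∇f(u_k + d) − ∇m_k(u_k + d)‖ ≤ κ_eg Δ_k and |f(u_k + d) − m_k(u_k + d)| ≤ κ_ef Δ_k²; (ii) the criticality condition Δ_k ≤ μ ‖∇m_k(u_k)‖; (iii) d_k is a global minimizer of d ↦ m_k(u_k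 + d) over the closed ball {d : ‖d‖ ≤ Δ_k}; (iv) with ρ_k := (f(u_k) − f(u_k + d_k)) / (m_k(u_k) − m_k(u_k + d_k)), the updates u_{k+1} = u_k + d_k if ρ_k ≥ η₁ and u_{k+1} = u_k otherwise, and Δ_{k+1} = min(γ_inc Δ_k, Δ_max) if ρ_k > η₂ and ‖d_k‖ = Δ_k, Δ_{k+1} = γ_red Δ_k if ρ_k < η₁, and Δ_{k+1} = Δ_k otherwise. Then the iterates are globally convergent to first-order criticality: lim_{k→∞} ‖∇f(u_k)‖ = 0. -/
/-!
The predicted decrease obeys the Cauchy bound `‖∇mₖ(uₖ)‖ Δₖ / c ≤ mₖ(uₖ) − mₖ(uₖ + dₖ)` with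
`c = 2 (1 + 2 κbhm μ)`, the criticality condition `Δₖ ≤ μ ‖∇mₖ(uₖ)‖` having absorbed the usual
`min`. Hence successful steps decrease `f` by at least `η₁ ‖∇mₖ(uₖ)‖ Δₖ / c`, and since `f` is
bounded below these decreases are summable. Three consequences follow. The radius tends to zero: it
shrinks geometrically on unsuccessful steps, and `Δₖ² ≤ μ ‖∇mₖ(uₖ)‖ Δₖ` on successful ones. The
gradient is small infinitely often: otherwise full linearity makes every small radius successful,
so the radius would eventually stop decreasing. Finally `∑ ‖∇f(uₖ)‖ ‖uₖ₊₁ − uₖ‖ < ∞`, and with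
`∇f` Lipschitz this upgrades the `liminf` to a limit.
-/

open Filter Topology InnerProductSpace
open scoped NNReal RealInnerProductSpace

theorem le_add_inner_gradient_add_mul_sq {E : Type*} [NormedAddCommGroup E]
    [InnerProductSpace ℝ E] [CompleteSpace E] {h : E → ℝ} (hh : Differentiable ℝ h) {κ : ℝ}
    (hκ : 0 ≤ κ)
    (hlip : ∀ x y, ‖gradient h x - gradient h y‖ ≤ κ * ‖x - y‖) (x s : E) :
    h (x + s) ≤ h x + ⟪gradient h x, s⟫ + κ * ‖s‖ ^ 2 := by
  have hbound : ∀ y ∈ Metric.closedBall x ‖s‖, ‖fderiv ℝ h y - fderiv ℝ h x‖ ≤ κ * ‖s‖ := by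
    intro y hy
    rw [← toDual_gradient, ← toDual_gradient, ← map_sub, LinearIsometryEquiv.norm_map]
    exact (hlip y x).trans (mul_le_mul_of_nonneg_left (mem_closedBall_iff_norm.1 hy) hκ)
  have hmv := (convex_closedBall x ‖s‖).norm_image_sub_le_of_norm_fderiv_le' (fun y _ => hh y)
    hbound (Metric.mem_closedBall_self (norm_nonneg s))
    (y := x + s) (by simp)
  rw [add_sub_cancel_left, ← inner_gradient_left, Real.norm_eq_abs] at hmv
  nlinarith [le_abs_self (h (x + s) - h x - ⟪gradient h x, s⟫)]

theorem tendsto_zero_of_le_max_mul {x a : ℕ → ℝ} {γ : ℝ} (hγ0 : 0 ≤ γ) (hγ1 : γ < 1)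
    (hx : ∀ k, 0 ≤ x k) (ha : Tendsto a atTop (𝓝 0))
    (hstep : ∀ k, x (k + 1) ≤ max (γ * x k) (a k)) :
    Tendsto x atTop (𝓝 0) := by
  refine tendsto_order.2 ⟨fun b hb => .of_forall fun k => hb.trans_le (hx k), fun ε hε => ?_⟩
  obtain ⟨N, hN⟩ := eventually_atTop.1 (ha.eventually_lt_const hε)
  have hstay : ∀ k ≥ N, x k < ε → x (k + 1) < ε := fun k hk hxk =>
    (hstep k).trans_lt (max_lt ((mul_le_of_le_one_left (hx k) hγ1.le).trans_lt hxk) (hN k hk))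
  by_cases hsmall : ∃ k₀ ≥ N, x k₀ < ε
  · obtain ⟨k₀, hk₀, hxk₀⟩ := hsmall
    exact eventually_atTop.2 ⟨k₀, fun k hk => Nat.le_induction hxk₀
      (fun n hn ih => hstay n (hk₀.trans hn) ih) k hk⟩
  push Not at hsmall
  have hgeom : ∀ j, x (N + j) ≤ γ ^ j * x N := by
    intro j
    induction j with
    | zero => simp
    | succ j ih =>
      have hmax : x (N + j + 1) ≤ γ * x (N + j) := (le_max_iff.1 (hstep (N + j))).resolve_right
        ((hN (N + j) (by omega)).trans_le (hsmall (N + j + 1) (by omega))).not_ge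
      calc x (N + (j + 1)) ≤ γ * x (N + j) := hmax
        _ ≤ γ * (γ ^ j * x N) := mul_le_mul_of_nonneg_left ih hγ0
        _ = γ ^ (j + 1) * x N := by ring
  have hpow : Tendsto (fun j => γ ^ j * x N) atTop (𝓝 0) := by
    simpa using (tendsto_pow_atTop_nhds_zero_of_lt_one hγ0 hγ1).mul_const (x N)
  obtain ⟨j, hj⟩ := (hpow.eventually_lt_const hε).exists
  exact absurd ((hsmall (N + j) (by omega)).trans (hgeom j)) hj.not_ge

theorem summable_sub_succ_of_antitone {a : ℕ → ℝ} (ha : Antitone a)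
    (hbdd : BddBelow (Set.range a)) : Summable fun k => a k - a (k + 1) := by
  obtain ⟨b, hb⟩ := hbdd
  refine summable_of_sum_range_le (c := a 0 - b) (fun k => sub_nonneg.2 (ha k.le_succ)) fun n => ?_
  rw [Finset.sum_range_sub']
  linarith [hb ⟨n, rfl⟩]

theorem mul_dist_le_sum_mul_dist {X : Type*} [PseudoMetricSpace X] (x : ℕ → X) {w : ℕ → ℝ}
    {c : ℝ} (hc : 0 ≤ c) {k j : ℕ} (hkj : k ≤ j) (hw : ∀ i ∈ Finset.Ico k j, c ≤ w i) :
    c * dist (x k) (x j) ≤ ∑ i ∈ Finset.Ico k j, w i * dist (x i) (x (i + 1)) :=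
  calc c * dist (x k) (x j) ≤ c * ∑ i ∈ Finset.Ico k j, dist (x i) (x (i + 1)) :=
        mul_le_mul_of_nonneg_left (dist_le_Ico_sum_dist x hkj) hc
    _ = ∑ i ∈ Finset.Ico k j, c * dist (x i) (x (i + 1)) := Finset.mul_sum _ _ _
    _ ≤ ∑ i ∈ Finset.Ico k j, w i * dist (x i) (x (i + 1)) :=
        Finset.sum_le_sum fun i hi => mul_le_mul_of_nonneg_right (hw i hi) dist_nonneg

theorem sum_Ico_le_tsum_nat_add {s : ℕ → ℝ} (hs : Summable s) (hs0 : ∀ i, 0 ≤ s i) (k j : ℕ) :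
    ∑ i ∈ Finset.Ico k j, s i ≤ ∑' i, s (i + k) := by
  rw [Finset.sum_Ico_eq_sum_range]
  simp only [add_comm k]
  exact ((summable_nat_add_iff k).2 hs).sum_le_tsum _ fun i _ => hs0 _

theorem tendsto_norm_zero_of_summable_mul_dist {X Y : Type*} [PseudoMetricSpace X]
    [SeminormedAddCommGroup Y] {F : X → Y} {K : ℝ≥0} (hF : LipschitzWith K F) {x : ℕ → X}
    (hsum : Summable fun k => ‖F (x k)‖ * dist (x k) (x (k + 1)))
    (hfreq : ∀ ε > 0, ∃ᶠ k in atTop, ‖F (x k)‖ < ε) :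
    Tendsto (fun k => ‖F (x k)‖) atTop (𝓝 0) := by
  refine tendsto_order.2 ⟨fun b hb => .of_forall fun k => hb.trans_le (norm_nonneg _),
    fun ε hε => ?_⟩
  have hδ : 0 < ε / 2 * (ε / (2 * (K + 1))) := by positivity
  have htail := (tendsto_sum_nat_add fun i => ‖F (x i)‖ * dist (x i) (x (i + 1)))
  filter_upwards [htail.eventually_lt_const hδ] with k hk
  by_contra! hεk
  classical
  obtain ⟨hkj, hj⟩ := Nat.find_spec ((frequently_atTop.1 (hfreq _ (half_pos hε))) k)
  set j := Nat.find ((frequently_atTop.1 (hfreq _ (half_pos hε))) k)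
  -- up to the first index `j ≥ k` with `‖F (x j)‖ < ε / 2`, every step carries weight at least
  -- `ε / 2`, so the small tail of the series makes the path from `x k` to `x j` short
  have hbig : ∀ i ∈ Finset.Ico k j, ε / 2 ≤ ‖F (x i)‖ := fun i hi => not_lt.1 fun hlt =>
    (Finset.mem_Ico.1 hi).2.not_ge (Nat.find_min' _ ⟨(Finset.mem_Ico.1 hi).1, hlt⟩)
  have hshort : dist (x k) (x j) < ε / (2 * (K + 1)) :=
    lt_of_mul_lt_mul_left ((mul_dist_le_sum_mul_dist x (half_pos hε).le hkj hbig).trans_lt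
      ((sum_Ico_le_tsum_nat_add hsum (fun i => by positivity) k j).trans_lt hk)) (half_pos hε).le
  have hLip : ‖F (x k)‖ - ‖F (x j)‖ ≤ K * dist (x k) (x j) := by
    calc ‖F (x k)‖ - ‖F (x j)‖ ≤ dist (F (x k)) (F (x j)) := by
          rw [dist_eq_norm]; exact norm_sub_norm_le _ _
      _ ≤ K * dist (x k) (x j) := hF.dist_le_mul _ _
  have hKdist : K * dist (x k) (x j) < ε / 2 := by
    calc K * dist (x k) (x j) ≤ (K + 1) * dist (x k) (x j) := by gcongr; linarith
      _ < (K + 1) * (ε / (2 * (K + 1))) := by gcongr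
      _ = ε / 2 := by field_simp
  linarith

theorem abs_sub_sub_le_of_abs_sub_le {E : Type*} [SeminormedAddGroup E] {f m : E → ℝ} {x d : E}
    {Δ κ : ℝ} (hΔ : 0 ≤ Δ) (hd : ‖d‖ ≤ Δ)
    (hfl : ∀ s : E, ‖s‖ ≤ Δ → |f (x + s) - m (x + s)| ≤ κ * Δ ^ 2) :
    |(f x - f (x + d)) - (m x - m (x + d))| ≤ 2 * κ * Δ ^ 2 := by
  have h0 := hfl 0 (by simpa using hΔ)
  rw [add_zero] at h0
  calc |(f x - f (x + d)) - (m x - m (x + d))| = |(f x - m x) - (f (x + d) - m (x + d))| := by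
        ring_nf
    _ ≤ |f x - m x| + |f (x + d) - m (x + d)| := abs_sub _ _
    _ ≤ 2 * κ * Δ ^ 2 := by linarith [hfl d hd]

theorem le_div_of_abs_sub_le_mul_sq {a p g Δ η κ c : ℝ} (hη : η < 1) (hc : 0 < c) (hp : 0 < p)
    (hΔ : 0 ≤ Δ) (hpred : g * Δ / c ≤ p) (herr : |a - p| ≤ κ * Δ ^ 2)
    (hsmall : κ * c / (1 - η) * Δ ≤ g) : η ≤ a / p := by
  have h1η : 0 < 1 - η := sub_pos.2 hη
  have hκ : κ * c * Δ ≤ (1 - η) * g := by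
    rw [div_mul_eq_mul_div, div_le_iff₀ h1η] at hsmall
    linarith
  have herr' : κ * Δ ^ 2 ≤ (1 - η) * p := by
    calc κ * Δ ^ 2 = κ * c * Δ * Δ / c := by field_simp
      _ ≤ (1 - η) * g * Δ / c := by gcongr
      _ = (1 - η) * (g * Δ / c) := by ring
      _ ≤ (1 - η) * p := by gcongr
  rw [le_div_iff₀ hp]
  linarith [(abs_le.1 herr).1]

namespace TrustRegion

section Step

variable {E : Type*} [NormedAddCommGroup E] [InnerProductSpace ℝ E] [CompleteSpace E]
  {f m : E → ℝ} {x d : E} {Δ μ κ η : ℝ}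

theorem cauchy_decrease (hm : Differentiable ℝ m) (hκ : 0 ≤ κ)
    (hlip : ∀ x y, ‖gradient m x - gradient m y‖ ≤ κ * ‖x - y‖)
    (hmin : ∀ s, ‖s‖ ≤ Δ → m (x + d) ≤ m (x + s)) {t : ℝ} (ht : 0 ≤ t) (htΔ : t ≤ Δ)
    (htg : 2 * κ * t ≤ ‖gradient m x‖) :
    t * ‖gradient m x‖ / 2 ≤ m x - m (x + d) := by
  set g := gradient m x
  rcases eq_or_ne g 0 with hg | hg
  · simpa [hg] using hmin 0 (by simpa using ht.trans htΔ)
  have hg' : 0 < ‖g‖ := norm_pos_iff.2 hg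
  set s := -((t / ‖g‖) • g)
  have hs : ‖s‖ = t := by
    rw [norm_neg, norm_smul, Real.norm_of_nonneg (by positivity), div_mul_cancel₀ t hg'.ne']
  have hinner : ⟪g, s⟫ = -(t * ‖g‖) := by
    rw [inner_neg_right, real_inner_smul_right, real_inner_self_eq_norm_sq]
    field_simp
  have hdesc := le_add_inner_gradient_add_mul_sq hm hκ hlip x s
  have hκt : κ * t ^ 2 ≤ t * ‖g‖ / 2 := by nlinarith
  rw [hinner, hs] at hdesc
  linarith [hmin s (hs ▸ htΔ)]

theorem cauchy_decrease_of_le_mul_norm (hm : Differentiable ℝ m) (hκ : 0 ≤ κ)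
    (hlip : ∀ x y, ‖gradient m x - gradient m y‖ ≤ κ * ‖x - y‖)
    (hmin : ∀ s, ‖s‖ ≤ Δ → m (x + d) ≤ m (x + s)) (hΔ : 0 ≤ Δ) (hμ : 0 ≤ μ)
    (hcrit : Δ ≤ μ * ‖gradient m x‖) :
    ‖gradient m x‖ * Δ / (2 * (1 + 2 * κ * μ)) ≤ m x - m (x + d) := by
  have hc : 1 ≤ 1 + 2 * κ * μ := by nlinarith
  have key := cauchy_decrease hm hκ hlip hmin (t := Δ / (1 + 2 * κ * μ)) (by positivity)
    (div_le_self hΔ hc) (by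
      rw [mul_div_assoc', div_le_iff₀ (by positivity)]
      nlinarith [norm_nonneg (gradient m x)])
  calc ‖gradient m x‖ * Δ / (2 * (1 + 2 * κ * μ)) = Δ / (1 + 2 * κ * μ) * ‖gradient m x‖ / 2 := by
        field_simp
    _ ≤ m x - m (x + d) := key

theorem sub_pos_of_le_mul_norm (hm : Differentiable ℝ m) (hκ : 0 ≤ κ)
    (hlip : ∀ x y, ‖gradient m x - gradient m y‖ ≤ κ * ‖x - y‖)
    (hmin : ∀ s, ‖s‖ ≤ Δ → m (x + d) ≤ m (x + s)) (hΔ : 0 < Δ) (hμ : 0 < μ)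
    (hcrit : Δ ≤ μ * ‖gradient m x‖) :
    0 < m x - m (x + d) := by
  have hg : 0 < ‖gradient m x‖ := pos_of_mul_pos_right (hΔ.trans_le hcrit) hμ.le
  exact (div_pos (mul_pos hg hΔ) (by positivity)).trans_le
    (cauchy_decrease_of_le_mul_norm hm hκ hlip hmin hΔ.le hμ.le hcrit)

theorem norm_gradient_mul_le_of_le_ratio (hm : Differentiable ℝ m) (hκ : 0 ≤ κ)
    (hlip : ∀ x y, ‖gradient m x - gradient m y‖ ≤ κ * ‖x - y‖)
    (hmin : ∀ s, ‖s‖ ≤ Δ → m (x + d) ≤ m (x + s)) (hΔ : 0 < Δ) (hμ : 0 < μ)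
    (hcrit : Δ ≤ μ * ‖gradient m x‖) (hη : 0 < η)
    (hρ : η ≤ (f x - f (x + d)) / (m x - m (x + d))) :
    ‖gradient m x‖ * Δ ≤ 2 * (1 + 2 * κ * μ) / η * (f x - f (x + d)) := by
  have hpred := cauchy_decrease_of_le_mul_norm hm hκ hlip hmin hΔ.le hμ.le hcrit
  have hratio := (le_div_iff₀ (sub_pos_of_le_mul_norm hm hκ hlip hmin hΔ hμ hcrit)).1 hρ
  rw [div_le_iff₀ (by positivity)] at hpred
  rw [div_mul_eq_mul_div, le_div_iff₀ hη]
  calc ‖gradient m x‖ * Δ * η ≤ (m x - m (x + d)) * (2 * (1 + 2 * κ * μ)) * η :=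
        mul_le_mul_of_nonneg_right hpred hη.le
    _ = 2 * (1 + 2 * κ * μ) * (η * (m x - m (x + d))) := by ring
    _ ≤ 2 * (1 + 2 * κ * μ) * (f x - f (x + d)) := mul_le_mul_of_nonneg_left hratio (by positivity)

theorem sq_le_of_le_ratio (hm : Differentiable ℝ m) (hκ : 0 ≤ κ)
    (hlip : ∀ x y, ‖gradient m x - gradient m y‖ ≤ κ * ‖x - y‖)
    (hmin : ∀ s, ‖s‖ ≤ Δ → m (x + d) ≤ m (x + s)) (hΔ : 0 < Δ) (hμ : 0 < μ)
    (hcrit : Δ ≤ μ * ‖gradient m x‖) (hη : 0 < η)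
    (hρ : η ≤ (f x - f (x + d)) / (m x - m (x + d))) :
    Δ ^ 2 ≤ μ * (2 * (1 + 2 * κ * μ) / η) * (f x - f (x + d)) := by
  calc Δ ^ 2 ≤ μ * (‖gradient m x‖ * Δ) := by nlinarith
    _ ≤ μ * (2 * (1 + 2 * κ * μ) / η * (f x - f (x + d))) := mul_le_mul_of_nonneg_left
        (norm_gradient_mul_le_of_le_ratio hm hκ hlip hmin hΔ hμ hcrit hη hρ) hμ.le
    _ = μ * (2 * (1 + 2 * κ * μ) / η) * (f x - f (x + d)) := by ring

theorem norm_gradient_mul_norm_le_of_le_ratio (hm : Differentiable ℝ m) (hκ : 0 ≤ κ)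
    (hlip : ∀ x y, ‖gradient m x - gradient m y‖ ≤ κ * ‖x - y‖)
    (hmin : ∀ s, ‖s‖ ≤ Δ → m (x + d) ≤ m (x + s)) (hΔ : 0 < Δ) (hμ : 0 < μ)
    (hcrit : Δ ≤ μ * ‖gradient m x‖) (hη : 0 < η)
    (hρ : η ≤ (f x - f (x + d)) / (m x - m (x + d))) (hd : ‖d‖ ≤ Δ) {κeg : ℝ} (hκeg : 0 ≤ κeg)
    (hgrad : ‖gradient f x‖ ≤ ‖gradient m x‖ + κeg * Δ) :
    ‖gradient f x‖ * ‖d‖ ≤ (1 + κeg * μ) * (2 * (1 + 2 * κ * μ) / η) * (f x - f (x + d)) := by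
  have hgrad' : ‖gradient f x‖ ≤ (1 + κeg * μ) * ‖gradient m x‖ := by nlinarith
  calc ‖gradient f x‖ * ‖d‖ ≤ (1 + κeg * μ) * (‖gradient m x‖ * Δ) := by
        rw [← mul_assoc]
        exact mul_le_mul hgrad' hd (norm_nonneg d) (by positivity)
    _ ≤ (1 + κeg * μ) * (2 * (1 + 2 * κ * μ) / η * (f x - f (x + d))) := mul_le_mul_of_nonneg_left
        (norm_gradient_mul_le_of_le_ratio hm hκ hlip hmin hΔ hμ hcrit hη hρ) (by positivity)
    _ = (1 + κeg * μ) * (2 * (1 + 2 * κ * μ) / η) * (f x - f (x + d)) := by ring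

theorem le_ratio_of_mul_le_norm (hm : Differentiable ℝ m) (hκ : 0 ≤ κ)
    (hlip : ∀ x y, ‖gradient m x - gradient m y‖ ≤ κ * ‖x - y‖)
    (hmin : ∀ s, ‖s‖ ≤ Δ → m (x + d) ≤ m (x + s)) (hΔ : 0 < Δ) (hμ : 0 < μ)
    (hcrit : Δ ≤ μ * ‖gradient m x‖) (hη : η < 1) (hd : ‖d‖ ≤ Δ) {κef : ℝ}
    (hfl : ∀ s, ‖s‖ ≤ Δ → |f (x + s) - m (x + s)| ≤ κef * Δ ^ 2)
    (hsmall : 2 * κef * (2 * (1 + 2 * κ * μ)) / (1 - η) * Δ ≤ ‖gradient m x‖) :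
    η ≤ (f x - f (x + d)) / (m x - m (x + d)) :=
  le_div_of_abs_sub_le_mul_sq hη (by positivity)
    (sub_pos_of_le_mul_norm hm hκ hlip hmin hΔ hμ hcrit) hΔ.le
    (cauchy_decrease_of_le_mul_norm hm hκ hlip hmin hΔ.le hμ.le hcrit)
    (abs_sub_sub_le_of_abs_sub_le hΔ.le hd hfl) hsmall

end Step

theorem radius_update_bounds {Δ Δ' Δmax γ : ℝ} {I : Prop} (hγ : 1 ≤ γ) (hΔ : 0 ≤ Δ)
    (hΔmax : Δ ≤ Δmax) (hinc : I → Δ' = min (γ * Δ) Δmax) (hkeep : ¬I → Δ' = Δ) :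
    Δ ≤ Δ' ∧ Δ' ≤ γ * Δ := by
  by_cases hI : I
  · rw [hinc hI]
    exact ⟨le_min (le_mul_of_one_le_left hΔ hγ) hΔmax, min_le_left _ _⟩
  · rw [hkeep hI]
    exact ⟨le_rfl, le_mul_of_one_le_left hΔ hγ⟩

theorem tendsto_radius_zero {Δ a : ℕ → ℝ} {P : ℕ → Prop} {γred γinc C : ℝ}
    (hγred0 : 0 ≤ γred) (hγred1 : γred < 1) (hγinc : 0 ≤ γinc) (hΔ : ∀ k, 0 ≤ Δ k)
    (ha : Tendsto a atTop (𝓝 0)) (hsucc : ∀ k, P k → Δ k ^ 2 ≤ C * a k ∧ Δ (k + 1) ≤ γinc * Δ k)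
    (hfail : ∀ k, ¬P k → Δ (k + 1) = γred * Δ k) :
    Tendsto Δ atTop (𝓝 0) := by
  have hroot : Tendsto (fun k => γinc * √(C * a k)) atTop (𝓝 0) := by
    simpa using ((ha.const_mul C).sqrt).const_mul γinc
  refine tendsto_zero_of_le_max_mul hγred0 hγred1 hΔ hroot fun k => ?_
  by_cases hk : P k
  · obtain ⟨hsq, hgrow⟩ := hsucc k hk
    refine le_max_of_le_right (hgrow.trans (mul_le_mul_of_nonneg_left ?_ hγinc))
    exact Real.le_sqrt_of_sq_le hsq
  · exact (hfail k hk).le.trans (le_max_left _ _)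

theorem frequently_lt_of_tendsto_radius_zero {G g Δ : ℕ → ℝ} {P : ℕ → Prop} {κ β : ℝ}
    (hΔpos : ∀ k, 0 < Δ k) (hΔ0 : Tendsto Δ atTop (𝓝 0))
    (hG : ∀ k, G k ≤ g k + κ * Δ k) (hsucc : ∀ k, β * Δ k ≤ g k → P k)
    (hgrow : ∀ k, P k → Δ k ≤ Δ (k + 1)) :
    ∀ ε > 0, ∃ᶠ k in atTop, G k < ε := by
  intro ε hε
  by_contra! hlarge
  have hκΔ : Tendsto (fun k => κ * Δ k) atTop (𝓝 0) := by simpa using hΔ0.const_mul κ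
  have hβΔ : Tendsto (fun k => β * Δ k) atTop (𝓝 0) := by simpa using hΔ0.const_mul β
  obtain ⟨N, hN⟩ := eventually_atTop.1 <| hlarge.and <|
    (hκΔ.eventually_lt_const (half_pos hε)).and (hβΔ.eventually_lt_const (half_pos hε))
  have hmono : ∀ k ≥ N, Δ N ≤ Δ k := fun k hk => by
    induction k, hk using Nat.le_induction with
    | base => rfl
    | succ k hk ih =>
      obtain ⟨hGk, hκk, hΔk⟩ := hN k hk
      refine ih.trans (hgrow k (hsucc k ?_))
      linarith [hG k]
  exact (hΔpos N).not_ge (ge_of_tendsto hΔ0 (eventually_atTop.2 ⟨N, hmono⟩))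

end TrustRegion

open TrustRegion

theorem trust_region_MA_global_convergence_general
    {E : Type*} [NormedAddCommGroup E] [InnerProductSpace ℝ E]
    [FiniteDimensional ℝ E]
    (f : E → ℝ)
    (L : ℝ)
    (hfLip : ∀ x y : E, ‖gradient f x - gradient f y‖ ≤ L * ‖x - y‖)
    (hfbdd : BddBelow (Set.range f))
    (η₁ η₂ γred γinc μ Δmax κef κeg κbhm : ℝ)
    (hη₁ : 0 < η₁) (hη₁₂ : η₁ < η₂) (hη₂ : η₂ < 1)
    (hγred : 0 < γred) (hγred1 : γred < 1) (hγinc : 1 < γinc)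
    (hμ : 0 < μ)
    (hκeg : 0 < κeg) (hκbhm : 0 < κbhm)
    (u : ℕ → E) (Δ : ℕ → ℝ) (m : ℕ → E → ℝ) (d : ℕ → E) (ρ : ℕ → ℝ)
    (hΔpos : ∀ k, 0 < Δ k) (hΔle : ∀ k, Δ k ≤ Δmax)
    (hm : ∀ k, ContDiff ℝ 1 (m k))
    (hmLip : ∀ k, ∀ x y : E,
      ‖gradient (m k) x - gradient (m k) y‖ ≤ κbhm * ‖x - y‖)
    (hfl_g : ∀ k, ∀ s : E, ‖s‖ ≤ Δ k →
      ‖gradient f (u k + s) - gradient (m k) (u k + s)‖ ≤ κeg * Δ k)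
    (hfl_f : ∀ k, ∀ s : E, ‖s‖ ≤ Δ k →
      |f (u k + s) - m k (u k + s)| ≤ κef * Δ k ^ 2)
    (hcrit : ∀ k, Δ k ≤ μ * ‖gradient (m k) (u k)‖)
    (hdle : ∀ k, ‖d k‖ ≤ Δ k)
    (hdmin : ∀ k, ∀ s : E, ‖s‖ ≤ Δ k → m k (u k + d k) ≤ m k (u k + s))
    (hρ : ∀ k, ρ k =
      (f (u k) - f (u k + d k)) / (m k (u k) - m k (u k + d k)))
    (hu_acc : ∀ k, η₁ ≤ ρ k → u (k + 1) = u k + d k)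
    (hu_rej : ∀ k, ρ k < η₁ → u (k + 1) = u k)
    (hΔ_inc : ∀ k, η₂ < ρ k ∧ ‖d k‖ = Δ k →
      Δ (k + 1) = min (γinc * Δ k) Δmax)
    (hΔ_red : ∀ k, ρ k < η₁ → Δ (k + 1) = γred * Δ k)
    (hΔ_keep : ∀ k, ¬(η₂ < ρ k ∧ ‖d k‖ = Δ k) → ¬(ρ k < η₁) →
      Δ (k + 1) = Δ k) :
    Filter.Tendsto (fun k => ‖gradient f (u k)‖) Filter.atTop (nhds 0) := by
  have hmd : ∀ k, Differentiable ℝ (m k) := fun k => (hm k).differentiable one_ne_zero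
  have hgrad : ∀ k, ‖gradient f (u k)‖ ≤ ‖gradient (m k) (u k)‖ + κeg * Δ k := fun k => by
    have := hfl_g k 0 (by simpa using (hΔpos k).le)
    rw [add_zero] at this
    linarith [norm_le_norm_add_norm_sub' (gradient f (u k)) (gradient (m k) (u k))]
  have hsq : ∀ k, η₁ ≤ ρ k →
      Δ k ^ 2 ≤ μ * (2 * (1 + 2 * κbhm * μ) / η₁) * (f (u k) - f (u (k + 1))) := fun k hk => by
    rw [hu_acc k hk]
    exact sq_le_of_le_ratio (hmd k) hκbhm.le (hmLip k) (hdmin k) (hΔpos k) hμ (hcrit k) hη₁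
      (hρ k ▸ hk)
  have hanti : Antitone fun k => f (u k) := antitone_nat_of_succ_le fun k => by
    rcases lt_or_ge (ρ k) η₁ with hk | hk
    · rw [hu_rej k hk]
    · exact sub_nonneg.1 (pos_of_mul_pos_right ((pow_pos (hΔpos k) 2).trans_le (hsq k hk))
        (by positivity)).le
  have hgap : Summable fun k => f (u k) - f (u (k + 1)) :=
    summable_sub_succ_of_antitone hanti (hfbdd.mono (Set.range_comp_subset_range u f))
  have hrad : ∀ k, η₁ ≤ ρ k → Δ k ≤ Δ (k + 1) ∧ Δ (k + 1) ≤ γinc * Δ k := fun k hk =>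
    radius_update_bounds hγinc.le (hΔpos k).le (hΔle k) (hΔ_inc k) fun h => hΔ_keep k h hk.not_gt
  have hΔ0 : Tendsto Δ atTop (𝓝 0) :=
    tendsto_radius_zero hγred.le hγred1 (by linarith) (fun k => (hΔpos k).le)
      hgap.tendsto_atTop_zero (fun k hk => ⟨hsq k hk, (hrad k hk).2⟩)
      fun k hk => hΔ_red k (not_le.1 hk)
  have hfreq : ∀ ε > 0, ∃ᶠ k in atTop, ‖gradient f (u k)‖ < ε :=
    frequently_lt_of_tendsto_radius_zero hΔpos hΔ0 hgrad
      (fun k hk => hρ k ▸ le_ratio_of_mul_le_norm (hmd k) hκbhm.le (hmLip k) (hdmin k) (hΔpos k) hμ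
        (hcrit k) (hη₁₂.trans hη₂) (hdle k) (hfl_f k) hk)
      fun k hk => (hrad k hk).1
  have hsum : Summable fun k => ‖gradient f (u k)‖ * dist (u k) (u (k + 1)) := by
    refine (hgap.mul_left ((1 + κeg * μ) * (2 * (1 + 2 * κbhm * μ) / η₁))).of_nonneg_of_le
      (fun k => by positivity) fun k => ?_
    rcases lt_or_ge (ρ k) η₁ with hk | hk
    · simp [hu_rej k hk]
    · rw [hu_acc k hk, dist_self_add_right]
      exact norm_gradient_mul_norm_le_of_le_ratio (hmd k) hκbhm.le (hmLip k) (hdmin k) (hΔpos k)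
        hμ (hcrit k) hη₁ (hρ k ▸ hk) (hdle k) hκeg.le (hgrad k)
  exact tendsto_norm_zero_of_summable_mul_dist
    (LipschitzWith.of_dist_le' fun x y => by simpa only [dist_eq_norm] using hfLip x y) hsum hfreq

/-- Global convergence (lim version) of the trust-region modifier-adaptation iteration
for an unconstrained problem with noiseless measurements: under full linearity of the
models, the criticality condition, exact global solution of the trust-region subproblems,
and the standard trust-region acceptance/radius-update rules, the full sequence of
iterates is globally convergent to first-order criticality. -/
theorem trust_region_MA_global_convergence
    {E : Type*} [NormedAddCommGroup E] [InnerProductSpace ℝ E]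
    [FiniteDimensional ℝ E]
    (f : E → ℝ) (hf : ContDiff ℝ 1 f)
    (L : ℝ) (hL : 0 < L)
    (hfLip : ∀ x y : E, ‖gradient f x - gradient f y‖ ≤ L * ‖x - y‖)
    (hfbdd : BddBelow (Set.range f))
    (η₁ η₂ γred γinc μ Δmax κef κeg κbhm : ℝ)
    (hη₁ : 0 < η₁) (hη₁₂ : η₁ < η₂) (hη₂ : η₂ < 1)
    (hγred : 0 < γred) (hγred1 : γred < 1) (hγinc : 1 < γinc)
    (hμ : 0 < μ) (hΔmax : 0 < Δmax)
    (hκef : 0 < κef) (hκeg : 0 < κeg) (hκbhm : 0 < κbhm)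
    (u : ℕ → E) (Δ : ℕ → ℝ) (m : ℕ → E → ℝ) (d : ℕ → E) (ρ : ℕ → ℝ)
    (hΔpos : ∀ k, 0 < Δ k) (hΔle : ∀ k, Δ k ≤ Δmax)
    (hm : ∀ k, ContDiff ℝ 1 (m k))
    (hmLip : ∀ k, ∀ x y : E,
      ‖gradient (m k) x - gradient (m k) y‖ ≤ κbhm * ‖x - y‖)
    (hfl_g : ∀ k, ∀ s : E, ‖s‖ ≤ Δ k →
      ‖gradient f (u k + s) - gradient (m k) (u k + s)‖ ≤ κeg * Δ k)
    (hfl_f : ∀ k, ∀ s : E, ‖s‖ ≤ Δ k →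
      |f (u k + s) - m k (u k + s)| ≤ κef * Δ k ^ 2)
    (hcrit : ∀ k, Δ k ≤ μ * ‖gradient (m k) (u k)‖)
    (hdle : ∀ k, ‖d k‖ ≤ Δ k)
    (hdmin : ∀ k, ∀ s : E, ‖s‖ ≤ Δ k → m k (u k + d k) ≤ m k (u k + s))
    (hρ : ∀ k, ρ k =
      (f (u k) - f (u k + d k)) / (m k (u k) - m k (u k + d k)))
    (hu_acc : ∀ k, η₁ ≤ ρ k → u (k + 1) = u k + d k)
    (hu_rej : ∀ k, ρ k < η₁ → u (k + 1) = u k)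
    (hΔ_inc : ∀ k, η₂ < ρ k ∧ ‖d k‖ = Δ k →
      Δ (k + 1) = min (γinc * Δ k) Δmax)
    (hΔ_red : ∀ k, ρ k < η₁ → Δ (k + 1) = γred * Δ k)
    (hΔ_keep : ∀ k, ¬(η₂ < ρ k ∧ ‖d k‖ = Δ k) → ¬(ρ k < η₁) →
      Δ (k + 1) = Δ k) :
    Filter.Tendsto (fun k => ‖gradient f (u k)‖) Filter.atTop (nhds 0) :=
  trust_region_MA_global_convergence_general f L hfLip hfbdd η₁ η₂ γred γinc μ Δmax κef κeg κbhm hη₁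
    hη₁₂ hη₂ hγred hγred1 hγinc hμ hκeg hκbhm u Δ m d ρ hΔpos hΔle hm hmLip hfl_g hfl_f hcrit hdle
    hdmin hρ hu_acc hu_rej hΔ_inc hΔ_red hΔ_keep
end
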